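/- arXiv:1009.2876 — 4 statements merged into one kernel-verified Lean document; each statement's English description precedes it below -/
import Mathlib

section
/- Let d ≥ 2 and set F(X,Y) = Y·∏_{i=1}^{d−1}(X+i) + X. For the derivation D = (∂_Y F)∂_X − (∂_X F)∂_Y, every polynomial X + i with 1 ≤ i ≤ d−1 is a Darboux polynomial of D. Consequently, for every subset I ⊆ {1,…,d−1}, the product ∏_{i∈I}(X+i) is a Darboux polynomial of D, so D has at least 2^(d−1) distinct Darboux polynomials of degree at most d−1. -/
open MvPolynomial

/-- For `F = Y ∏_{i=1}^{d-1} (X+i) + X` and the Hamiltonian derivation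
`D = (∂_Y F) ∂_X - (∂_X F) ∂_Y`, each `X + i` (`1 ≤ i ≤ d-1`) is a Darboux polynomial, hence so is
`∏_{i ∈ I} (X+i)` for every `I ⊆ {1,…,d-1}`, giving at least `2^(d-1)` distinct Darboux
polynomials of degree at most `d-1`. -/
theorem exponentially_many_darboux
    (d : ℕ) (hd : 2 ≤ d)
    (F : MvPolynomial (Fin 2) ℂ)
    (hF : F = X 1 * (∏ i ∈ Finset.Icc 1 (d - 1), (X 0 + (i : MvPolynomial (Fin 2) ℂ))) + X 0)
    (D : MvPolynomial (Fin 2) ℂ → MvPolynomial (Fin 2) ℂ)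
    (hD : ∀ h, D h = pderiv 1 F * pderiv 0 h - pderiv 0 F * pderiv 1 h) :
    (∀ i ∈ Finset.Icc 1 (d - 1),
      ∃ g, D (X 0 + (i : MvPolynomial (Fin 2) ℂ)) = g * (X 0 + (i : MvPolynomial (Fin 2) ℂ))) ∧
    (∀ I ⊆ Finset.Icc 1 (d - 1),
      ∃ g, D (∏ i ∈ I, (X 0 + (i : MvPolynomial (Fin 2) ℂ)))
          = g * ∏ i ∈ I, (X 0 + (i : MvPolynomial (Fin 2) ℂ))) ∧
    (∃ S : Finset (MvPolynomial (Fin 2) ℂ), 2 ^ (d - 1) ≤ S.card ∧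
      ∀ f ∈ S, (∃ g, D f = g * f) ∧ f.totalDegree ≤ d - 1) := by
  classical
  set P : MvPolynomial (Fin 2) ℂ :=
    ∏ i ∈ Finset.Icc 1 (d - 1), (X 0 + (i : MvPolynomial (Fin 2) ℂ)) with hPdef
  have hP1 : pderiv 1 P = 0 := by
    refine Finset.prod_induction _ (fun q => pderiv 1 q = 0) ?_ (by simp) ?_
    · intro a b ha hb; simp [pderiv_mul, ha, hb]
    · intro i _
      simp [pderiv_X]
  have hF1 : pderiv 1 F = P := by
    rw [hF]
    simp [pderiv_mul, hP1, pderiv_X]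
  -- each X + i is Darboux
  have single : ∀ i ∈ Finset.Icc 1 (d - 1),
      ∃ g, D (X 0 + (i : MvPolynomial (Fin 2) ℂ)) = g * (X 0 + (i : MvPolynomial (Fin 2) ℂ)) := by
    intro i hi
    refine ⟨∏ j ∈ (Finset.Icc 1 (d - 1)).erase i, (X 0 + (j : MvPolynomial (Fin 2) ℂ)), ?_⟩
    rw [hD, hF1]
    have h0 : pderiv 0 (X 0 + (i : MvPolynomial (Fin 2) ℂ)) = 1 := by simp [pderiv_X]
    have h1 : pderiv 1 (X 0 + (i : MvPolynomial (Fin 2) ℂ)) = 0 := by simp [pderiv_X]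
    rw [h0, h1, mul_one, mul_zero, sub_zero, hPdef,
      ← Finset.mul_prod_erase _ _ hi, mul_comm]
  -- product rule for D
  have mulrule : ∀ f h, D (f * h) = D f * h + f * D h := by
    intro f h
    simp only [hD, pderiv_mul]
    ring
  -- products are Darboux
  have key : ∀ I ⊆ Finset.Icc 1 (d - 1),
      ∃ g, D (∏ i ∈ I, (X 0 + (i : MvPolynomial (Fin 2) ℂ)))
          = g * ∏ i ∈ I, (X 0 + (i : MvPolynomial (Fin 2) ℂ)) := by
    intro I
    induction I using Finset.induction_on with
    | empty =>
      intro _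
      refine ⟨0, ?_⟩
      rw [hD]; simp
    | @insert a I ha ih =>
      intro hsub
      have haI : a ∈ Finset.Icc 1 (d - 1) := hsub (Finset.mem_insert_self a I)
      have hIsub : I ⊆ Finset.Icc 1 (d - 1) :=
        fun x hx => hsub (Finset.mem_insert_of_mem hx)
      obtain ⟨g, hg⟩ := single a haI
      obtain ⟨g', hg'⟩ := ih hIsub
      refine ⟨g + g', ?_⟩
      rw [Finset.prod_insert ha, mulrule, hg, hg']
      ring
  refine ⟨single, key, ?_⟩
  -- the finite set of products
  refine ⟨(Finset.Icc 1 (d - 1)).powerset.image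
    (fun I : Finset ℕ => ∏ i ∈ I, (X 0 + (i : MvPolynomial (Fin 2) ℂ))), ?_, ?_⟩
  · -- cardinality
    have hinj : Set.InjOn (fun I : Finset ℕ => ∏ i ∈ I, (X 0 + (i : MvPolynomial (Fin 2) ℂ)))
        ((Finset.Icc 1 (d - 1)).powerset : Finset (Finset ℕ)) := by
      intro I _ J _ heq
      have heval : ∀ (K : Finset ℕ) (k : ℕ),
          aeval (fun j : Fin 2 => if j = 0 then -(k : ℂ) else 0)
            (∏ i ∈ K, (X 0 + (i : MvPolynomial (Fin 2) ℂ))) = ∏ i ∈ K, ((i : ℂ) - k) := by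
        intro K k
        rw [map_prod]
        apply Finset.prod_congr rfl
        intro i _
        simp [sub_eq_add_neg, add_comm]
      have hzero : ∀ (K : Finset ℕ) (k : ℕ), (∏ i ∈ K, ((i : ℂ) - k)) = 0 ↔ k ∈ K := by
        intro K k
        rw [Finset.prod_eq_zero_iff]
        constructor
        · rintro ⟨i, hiK, hi⟩
          rw [sub_eq_zero, Nat.cast_inj] at hi
          rwa [hi] at hiK
        · intro hk; exact ⟨k, hk, by ring⟩
      ext k
      have h := congrArg (aeval (fun j : Fin 2 => if j = 0 then -(k : ℂ) else 0)) heq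
      rw [heval, heval] at h
      rw [← hzero I k, ← hzero J k, h]
    rw [Finset.card_image_of_injOn hinj, Finset.card_powerset, Nat.card_Icc]
    have : d - 1 + 1 - 1 = d - 1 := by omega
    rw [this]
  · intro f hf
    obtain ⟨I, hIpow, rfl⟩ := Finset.mem_image.mp hf
    rw [Finset.mem_powerset] at hIpow
    refine ⟨key I hIpow, ?_⟩
    calc (∏ i ∈ I, (X 0 + (i : MvPolynomial (Fin 2) ℂ))).totalDegree
        ≤ ∑ i ∈ I, (X 0 + (i : MvPolynomial (Fin 2) ℂ)).totalDegree :=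
          totalDegree_finset_prod _ _
      _ ≤ ∑ _i ∈ I, 1 := by
          apply Finset.sum_le_sum
          intro i _
          refine le_trans (totalDegree_add _ _) ?_
          have h : ((i : MvPolynomial (Fin 2) ℂ)).totalDegree = 0 := totalDegree_C (i : ℂ)
          simp [totalDegree_X, h]
      _ = I.card := by simp
      _ ≤ d - 1 := by
          have := Finset.card_le_card hIpow
          rwa [Nat.card_Icc, show d - 1 + 1 - 1 = d - 1 by omega] at this
end

section
/- For the derivation D = −2X²·∂_X + (1−4XY)·∂_Y on ℂ[X,Y], the first ecstatic polynomial E₁(D) equals Y·X⁴ up to a nonzero constant factor, yet Y is not a Darboux polynomial of D; hence the converse of the statement 'every Darboux polynomial of degree ≤ N divides E_N(D)' fails. -/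
open MvPolynomial

/-- For `D = -2X² ∂_X + (1 - 4XY) ∂_Y`, the first ecstatic polynomial (determinant
of the 3×3 matrix with rows `(v, D(v), D²(v))` over the monomial basis `{1, X, Y}` of degree-≤1
polynomials) equals `Y·X⁴` up to a nonzero constant, yet `Y` is not a Darboux polynomial of `D`.
Hence the converse of Statement 5 fails. -/
theorem ecstatic_converse_fails
    (D : MvPolynomial (Fin 2) ℂ → MvPolynomial (Fin 2) ℂ)
    (hD : ∀ h, D h = (-2 * X 0 ^ 2) * pderiv 0 h + (1 - 4 * X 0 * X 1) * pderiv 1 h)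
    (M : Matrix (Fin 3) (Fin 3) (MvPolynomial (Fin 2) ℂ))
    (hM : ∀ j i, M j i = D^[(j : ℕ)] (![1, X 0, X 1] i)) :
    (∃ c : ℂ, c ≠ 0 ∧ M.det = C c * (X 1 * X 0 ^ 4)) ∧
    ¬ ∃ g, D (X 1) = g * X 1 := by
  have d1 : D 1 = 0 := by rw [hD]; simp
  have dX : D (X 0) = -2 * X 0 ^ 2 := by rw [hD]; simp
  have dY : D (X 1) = 1 - 4 * X 0 * X 1 := by rw [hD]; simp
  have d0 : D 0 = 0 := by rw [hD]; simp
  have c2 : (2 : MvPolynomial (Fin 2) ℂ) = C 2 := (map_ofNat (C : ℂ →+* MvPolynomial (Fin 2) ℂ) 2).symm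
  have c4 : (4 : MvPolynomial (Fin 2) ℂ) = C 4 := (map_ofNat (C : ℂ →+* MvPolynomial (Fin 2) ℂ) 4).symm
  have dX2 : D (-2 * X 0 ^ 2) = 8 * X 0 ^ 3 := by
    rw [hD, c2]; simp [pderiv_pow]; rw [← c2]; ring
  have dY2 : D (1 - 4 * X 0 * X 1) = 24 * X 0 ^ 2 * X 1 - 4 * X 0 := by
    rw [hD, c4]; simp; rw [← c4]; ring
  constructor
  · refine ⟨-16, by norm_num, ?_⟩
    rw [Matrix.det_fin_three]
    simp only [hM]
    simp only [Function.iterate_succ, Function.iterate_zero, Function.comp_apply, id_eq,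
      Matrix.cons_val_zero, Matrix.cons_val_one, Matrix.head_cons, Matrix.cons_val_two,
      Matrix.tail_cons, Fin.val_zero, Fin.val_one, Fin.val_two, Fin.isValue]
    rw [d1, dX, dY, dX2, dY2, d0]
    simp only [map_neg, map_ofNat]
    ring
  · rintro ⟨g, hg⟩
    rw [dY] at hg
    have := congrArg (eval (fun _ => 0 : Fin 2 → ℂ)) hg
    simp at this
end

section
/- Let D = A∂_X + B∂_Y with deg A, deg B ≤ d (d ≥ 1) and let l = (N+1)(N+2)/2. Then the degree of the N-th ecstatic polynomial satisfies deg E_N(D) ≤ N·l + (d−1)·(l−1)·l/2. -/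
open MvPolynomial

/-- Index set for the monomial basis of polynomials of total degree at most `N` in two
variables: pairs of exponents `(i, j)` with `i + j ≤ N`.  It has `(N+1)(N+2)/2` elements. -/
abbrev EcsIdx (N : ℕ) := {m : Fin (N + 1) × Fin (N + 1) // (m.1 : ℕ) + (m.2 : ℕ) ≤ N}

/-- The monomial basis `X^i Y^j`, `i + j ≤ N`, of `R[X,Y]_{≤N}`. -/
noncomputable def monFam {R : Type*} [CommRing R] (N : ℕ) :
    EcsIdx N → MvPolynomial (Fin 2) R :=
  fun m => X 0 ^ (m.val.1 : ℕ) * X 1 ^ (m.val.2 : ℕ)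

/-- The ecstatic matrix of the derivation `D = A ∂_X + B ∂_Y` with respect to a family
`w` indexed by `EcsIdx N`: its rows are `D^{j}(w i)` for `j = 0, …, l-1` (rows enumerated via
the equivalence `EcsIdx N ≃ Fin l`). -/
noncomputable def ecsMatOf {R : Type*} [CommRing R] (A B : MvPolynomial (Fin 2) R) (N : ℕ)
    (w : EcsIdx N → MvPolynomial (Fin 2) R) :
    Matrix (EcsIdx N) (EcsIdx N) (MvPolynomial (Fin 2) R) :=
  fun j i =>
    ((fun h => A * pderiv 0 h + B * pderiv 1 h)^[((Fintype.equivFin (EcsIdx N)) j : ℕ)]) (w i)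

/-- The `N`-th ecstatic polynomial `E_N(D)` of `D = A ∂_X + B ∂_Y`: the determinant of the
ecstatic matrix built on the monomial basis of `R[X,Y]_{≤N}`. -/
noncomputable def ecstatic {R : Type*} [CommRing R] (A B : MvPolynomial (Fin 2) R) (N : ℕ) :
    MvPolynomial (Fin 2) R :=
  (ecsMatOf A B N (monFam N)).det

lemma totalDegree_pderiv_le (f : MvPolynomial (Fin 2) ℂ) (i : Fin 2) :
    (pderiv i f).totalDegree ≤ f.totalDegree - 1 := by
  conv_lhs => rw [f.as_sum]
  rw [map_sum]
  apply totalDegree_finsetSum_le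
  intro m hm
  rw [pderiv_monomial]
  rcases Nat.eq_zero_or_pos (m i) with h | h
  · simp [h]
  refine (totalDegree_monomial_le _ _).trans ?_
  have hsum : (m - Finsupp.single i 1).sum (fun _ => id) = m.sum (fun _ => id) - 1 := by
    rw [Finsupp.sum_fintype _ _ (fun _ => rfl), Finsupp.sum_fintype _ _ (fun _ => rfl)]
    simp only [Fin.sum_univ_two, id, Finsupp.tsub_apply, Finsupp.single_apply]
    fin_cases i <;> simp_all <;> omega
  rw [hsum]
  have : m.sum (fun _ => id) ≤ f.totalDegree := le_totalDegree hm
  omega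

lemma ecsIdx_card (N : ℕ) : Fintype.card (EcsIdx N) = (N + 1) * (N + 2) / 2 := by
  rw [Fintype.card_subtype, Finset.card_filter, Fintype.sum_prod_type]
  have h1 : ∀ i : Fin (N+1), (∑ j : Fin (N+1), if (i:ℕ) + (j:ℕ) ≤ N then 1 else 0) = N + 1 - (i:ℕ) := by
    intro i
    rw [Fin.sum_univ_eq_sum_range (fun j => if (i:ℕ) + j ≤ N then 1 else 0)]
    rw [← Finset.card_filter]
    have : Finset.filter (fun j => (i:ℕ) + j ≤ N) (Finset.range (N+1)) = Finset.range (N+1-(i:ℕ)) := by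
      ext j; simp only [Finset.mem_filter, Finset.mem_range]; omega
    rw [this, Finset.card_range]
  rw [Finset.sum_congr rfl (fun i _ => h1 i)]
  rw [Fin.sum_univ_eq_sum_range (fun i => N + 1 - i)]
  rw [show (∑ i ∈ Finset.range (N+1), (N+1-i)) = ∑ i ∈ Finset.range (N+1), ((N+1-1-i)+1) from
    Finset.sum_congr rfl (by intro j hj; simp only [Finset.mem_range] at hj; omega),
    Finset.sum_range_reflect (fun i => i+1) (N+1)]
  have h2 := Finset.sum_range_id (N + 2)
  rw [Finset.sum_range_succ' (fun i => i) (N+1), show (N+2)*(N+2-1) = (N+1)*(N+2) by rw [show N+2-1 = N+1 from rfl, Nat.mul_comm]] at h2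
  omega

lemma degD (A B : MvPolynomial (Fin 2) ℂ) (d : ℕ) (hd : 1 ≤ d)
    (hA : A.totalDegree ≤ d) (hB : B.totalDegree ≤ d) (h : MvPolynomial (Fin 2) ℂ) :
    (A * pderiv 0 h + B * pderiv 1 h).totalDegree ≤ h.totalDegree + (d - 1) := by
  rcases eq_or_ne h.totalDegree 0 with ht | ht
  · have hp : ∀ i : Fin 2, pderiv i h = 0 := by
      intro i
      rw [h.as_sum, map_sum]
      apply Finset.sum_eq_zero
      intro m hm
      have h0 := (totalDegree_eq_zero_iff _ h).mp ht m hm i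
      rw [pderiv_monomial]
      simp [h0]
    rw [hp 0, hp 1]
    simp
  · refine (totalDegree_add _ _).trans (max_le ?_ ?_)
    · refine (totalDegree_mul _ _).trans ?_
      have := totalDegree_pderiv_le h 0
      omega
    · refine (totalDegree_mul _ _).trans ?_
      have := totalDegree_pderiv_le h 1
      omega

lemma degDiter (A B : MvPolynomial (Fin 2) ℂ) (d : ℕ) (hd : 1 ≤ d)
    (hA : A.totalDegree ≤ d) (hB : B.totalDegree ≤ d) (k : ℕ) (h : MvPolynomial (Fin 2) ℂ) :
    (((fun h => A * pderiv 0 h + B * pderiv 1 h)^[k]) h).totalDegree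
      ≤ h.totalDegree + k * (d - 1) := by
  induction k with
  | zero => simp
  | succ n ih =>
      rw [Function.iterate_succ_apply']
      have := degD A B d hd hA hB (((fun h => A * pderiv 0 h + B * pderiv 1 h)^[n]) h)
      calc _ ≤ _ := this
        _ ≤ h.totalDegree + n * (d-1) + (d-1) := by omega
        _ = h.totalDegree + (n+1) * (d-1) := by ring

/-- For `D = A ∂_X + B ∂_Y` with `deg A, deg B ≤ d` (`d ≥ 1`) and
`l = (N+1)(N+2)/2`, the degree of `E_N(D)` is at most `N·l + (d-1)(l-1)l/2`. -/
theorem ecstatic_degree_bound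
    (A B : MvPolynomial (Fin 2) ℂ) (d N : ℕ) (hd : 1 ≤ d)
    (hA : A.totalDegree ≤ d) (hB : B.totalDegree ≤ d) :
    (ecstatic A B N).totalDegree
      ≤ N * ((N + 1) * (N + 2) / 2)
        + (d - 1) * ((((N + 1) * (N + 2) / 2) - 1) * ((N + 1) * (N + 2) / 2) / 2) := by
  set l := Fintype.card (EcsIdx N) with hl
  have hentry : ∀ j i : EcsIdx N,
      ((ecsMatOf A B N (monFam N)) j i).totalDegree ≤ N + ((Fintype.equivFin (EcsIdx N)) j : ℕ) * (d - 1) := by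
    intro j i
    refine (degDiter A B d hd hA hB _ _).trans ?_
    have hmon : (monFam (R := ℂ) N i).totalDegree ≤ N := by
      unfold monFam
      refine (totalDegree_mul _ _).trans ?_
      simp only [totalDegree_X_pow]
      exact i.property
    omega
  rw [ecstatic, Matrix.det_apply]
  apply totalDegree_finsetSum_le
  intro σ _
  refine (totalDegree_smul_le _ _).trans ?_
  refine (totalDegree_finset_prod _ _).trans ?_
  have hsum : ∑ i : EcsIdx N, ((ecsMatOf A B N (monFam N)) (σ i) i).totalDegree
      ≤ ∑ i : EcsIdx N, (N + ((Fintype.equivFin (EcsIdx N)) (σ i) : ℕ) * (d - 1)) :=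
    Finset.sum_le_sum fun i _ => hentry (σ i) i
  refine hsum.trans ?_
  rw [Finset.sum_add_distrib, Finset.sum_const, ← Finset.sum_mul]
  have h1 : ∑ i : EcsIdx N, ((Fintype.equivFin (EcsIdx N)) (σ i) : ℕ) = ∑ j : EcsIdx N, ((Fintype.equivFin (EcsIdx N)) j : ℕ) :=
    Equiv.sum_comp σ (fun j => ((Fintype.equivFin (EcsIdx N)) j : ℕ))
  have h2 : ∑ j : EcsIdx N, ((Fintype.equivFin (EcsIdx N)) j : ℕ) = ∑ k : Fin l, (k : ℕ) :=
    (Equiv.sum_comp (Fintype.equivFin (EcsIdx N)) (fun k : Fin l => (k : ℕ)))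
  have h3 : ∑ k : Fin l, (k : ℕ) = (l - 1) * l / 2 := by
    rw [Fin.sum_univ_eq_sum_range (fun k => k), Finset.sum_range_id, Nat.mul_comm]
  have hcard : l = (N + 1) * (N + 2) / 2 := ecsIdx_card N
  rw [h1, h2, h3]
  simp only [Finset.card_univ, smul_eq_mul, ← hl]
  rw [hcard]
  exact le_of_eq (by ring)
end

section
/- Let D = A∂_X + B∂_Y with A, B ∈ ℤ[X,Y], deg A, deg B ≤ d, ‖A‖_∞, ‖B‖_∞ ≤ H, and let f ∈ ℤ[X,Y] with deg f ≤ N. Then for every i ≥ 1, ‖D^i(f)‖_∞ ≤ 2^i·H^i·(∏_{k=0}^{i−1}(k(d−1)+N)³)·‖f‖_∞. -/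
/-!
Write `D g = ∑ j, A j * ∂_j g` in `n` variables. If `deg g ≤ M`, every exponent of a monomial of
`∂_j g` is below `M`, so `∂_j g` has at most `M ^ n` monomials, each with coefficient at most
`M ‖g‖_∞`; multiplying by `A j` therefore costs a factor `H M ^ n`, and the `n` terms give
`‖D g‖_∞ ≤ n H M ^ (n + 1) ‖g‖_∞`. As `D` raises the degree by at most `d - 1`, the `k`-th iterate
has degree at most `k (d - 1) + N`, and the bound multiplies up. For `n = 2` this is the claim.
-/

namespace MvPolynomial

open Finset Finsupp

variable {σ R : Type*}

section CommSemiring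

variable [CommSemiring R]

theorem degree_le_totalDegree {p : MvPolynomial σ R} {m : σ →₀ ℕ} (h : m ∈ p.support) :
    m.degree ≤ p.totalDegree :=
  le_totalDegree h

theorem degree_lt_totalDegree_of_mem_support_pderiv {i : σ} {g : MvPolynomial σ R}
    {m : σ →₀ ℕ} (hm : m ∈ (pderiv i g).support) : m.degree < g.totalDegree := by
  have hmem : m + single i 1 ∈ g.support := by
    rw [mem_support_iff, coeff_pderiv] at hm
    exact mem_support_iff.2 (left_ne_zero_of_mul hm)
  simpa using degree_le_totalDegree hmem

theorem totalDegree_mul_pderiv_le (P g : MvPolynomial σ R) (i : σ) :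
    (P * pderiv i g).totalDegree ≤ P.totalDegree + g.totalDegree - 1 := by
  by_cases h0 : pderiv i g = 0
  · simp [h0]
  have hlt : (pderiv i g).totalDegree < g.totalDegree := by
    obtain ⟨m, hm, hdeg⟩ := exists_mem_eq_sup _ (support_nonempty.2 h0)
      fun m : σ →₀ ℕ => m.degree
    rw [show (pderiv i g).totalDegree = m.degree from hdeg]
    exact degree_lt_totalDegree_of_mem_support_pderiv hm
  have := totalDegree_mul P (pderiv i g)
  omega

theorem card_support_le_pow [Fintype σ] (p : MvPolynomial σ R) (a : ℕ)
    (h : ∀ m ∈ p.support, m.degree < a) : #p.support ≤ a ^ Fintype.card σ := by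
  classical
  calc #p.support ≤ #(Fintype.piFinset fun _ : σ => range a) := by
        refine card_le_card_of_injOn (fun m => ⇑m) (fun m hm => ?_) DFunLike.coe_injective.injOn
        simpa using fun j => (le_degree j m).trans_lt (h m hm)
    _ = a ^ Fintype.card σ := by simp

theorem totalDegree_sum_mul_pderiv_le [Fintype σ] {A : σ → MvPolynomial σ R} {g : MvPolynomial σ R}
    {d M : ℕ} (hA : ∀ j, (A j).totalDegree ≤ d) (hg : g.totalDegree ≤ M) :
    (∑ j, A j * pderiv j g).totalDegree ≤ M + (d - 1) := by
  refine (totalDegree_finsetSum _ _).trans (Finset.sup_le fun j _ => ?_)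
  have := totalDegree_mul_pderiv_le (A j) g j
  have := hA j
  omega

theorem totalDegree_iterate_sum_mul_pderiv_le [Fintype σ] {A : σ → MvPolynomial σ R}
    {f : MvPolynomial σ R} {d N : ℕ} (hA : ∀ j, (A j).totalDegree ≤ d) (hf : f.totalDegree ≤ N)
    (i : ℕ) : ((fun g => ∑ j, A j * pderiv j g)^[i] f).totalDegree ≤ i * (d - 1) + N := by
  induction i with
  | zero => simpa using hf
  | succ i ih =>
    rw [Function.iterate_succ_apply']
    exact (totalDegree_sum_mul_pderiv_le hA ih).trans (by rw [add_one_mul]; omega)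

end CommSemiring

section OrderedRing

variable [CommRing R] [LinearOrder R] [IsStrictOrderedRing R]

theorem abs_coeff_mul_le {p q : MvPolynomial σ R} {Hp Hq : R}
    (hp : ∀ m, |p.coeff m| ≤ Hp) (hq : ∀ m, |q.coeff m| ≤ Hq) (m : σ →₀ ℕ) :
    |(p * q).coeff m| ≤ #q.support * (Hp * Hq) := by
  have hterm : ∀ s, |(p * monomial s (q.coeff s)).coeff m| ≤ Hp * Hq := fun s => by
    rw [coeff_mul_monomial']
    split_ifs
    · rw [abs_mul]
      exact mul_le_mul (hp _) (hq _) (abs_nonneg _) ((abs_nonneg _).trans (hp m))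
    · simpa using mul_nonneg ((abs_nonneg _).trans (hp m)) ((abs_nonneg _).trans (hq m))
  calc |(p * q).coeff m|
      = |∑ s ∈ q.support, (p * monomial s (q.coeff s)).coeff m| := by
        conv_lhs => rw [q.as_sum, Finset.mul_sum, coeff_sum]
    _ ≤ ∑ s ∈ q.support, |(p * monomial s (q.coeff s)).coeff m| := abs_sum_le_sum_abs _ _
    _ ≤ #q.support * (Hp * Hq) := by
        simpa using sum_le_card_nsmul _ _ _ fun s _ => hterm s

theorem abs_coeff_pderiv_le {g : MvPolynomial σ R} {C : R} (hg : ∀ m, |g.coeff m| ≤ C)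
    (i : σ) (m : σ →₀ ℕ) : |(pderiv i g).coeff m| ≤ g.totalDegree * C := by
  have hC : 0 ≤ C := (abs_nonneg _).trans (hg m)
  rw [coeff_pderiv]
  by_cases hz : g.coeff (m + single i 1) = 0
  · simpa [hz] using mul_nonneg (Nat.cast_nonneg _) hC
  have hdeg : m i + 1 ≤ g.totalDegree := by
    have hle := degree_le_totalDegree (mem_support_iff.2 hz)
    rw [map_add, degree_single] at hle
    have := le_degree i m
    omega
  rw [abs_mul, mul_comm, abs_of_nonneg (by positivity : (0 : R) ≤ m i + 1)]
  exact mul_le_mul (by exact_mod_cast hdeg) (hg _) (abs_nonneg _) (Nat.cast_nonneg _)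

variable [Fintype σ]

theorem abs_coeff_mul_pderiv_le {P g : MvPolynomial σ R} {H C : R} {M : ℕ}
    (hP : ∀ m, |P.coeff m| ≤ H) (hgdeg : g.totalDegree ≤ M) (hg : ∀ m, |g.coeff m| ≤ C)
    (i : σ) (m : σ →₀ ℕ) : |(P * pderiv i g).coeff m| ≤ H * M ^ (Fintype.card σ + 1) * C := by
  have hH : 0 ≤ H := (abs_nonneg _).trans (hP 0)
  have hC : 0 ≤ C := (abs_nonneg _).trans (hg 0)
  have hcard : #(pderiv i g).support ≤ M ^ Fintype.card σ :=
    card_support_le_pow _ _ fun m hm =>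
      (degree_lt_totalDegree_of_mem_support_pderiv hm).trans_le hgdeg
  have hcoeff : ∀ m, |(pderiv i g).coeff m| ≤ M * C := fun m =>
    (abs_coeff_pderiv_le hg i m).trans (by gcongr)
  calc |(P * pderiv i g).coeff m| ≤ #(pderiv i g).support * (H * (M * C)) :=
        abs_coeff_mul_le hP hcoeff m
    _ ≤ (M ^ Fintype.card σ : ℕ) * (H * (M * C)) := by gcongr
    _ = H * M ^ (Fintype.card σ + 1) * C := by push_cast; ring

theorem abs_coeff_sum_mul_pderiv_le {A : σ → MvPolynomial σ R} {g : MvPolynomial σ R}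
    {H C : R} {M : ℕ} (hA : ∀ j m, |(A j).coeff m| ≤ H) (hgdeg : g.totalDegree ≤ M)
    (hg : ∀ m, |g.coeff m| ≤ C) (m : σ →₀ ℕ) :
    |(∑ j, A j * pderiv j g).coeff m| ≤ Fintype.card σ * H * M ^ (Fintype.card σ + 1) * C := by
  rw [coeff_sum]
  refine (abs_sum_le_sum_abs _ _).trans ?_
  refine (sum_le_card_nsmul _ _ _ fun j _ => abs_coeff_mul_pderiv_le (hA j) hgdeg hg j m).trans_eq ?_
  rw [card_univ, nsmul_eq_mul]
  ring

theorem abs_coeff_iterate_sum_mul_pderiv_le {A : σ → MvPolynomial σ R} {f : MvPolynomial σ R}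
    {d N : ℕ} {H C : R} (hdA : ∀ j, (A j).totalDegree ≤ d) (hA : ∀ j m, |(A j).coeff m| ≤ H)
    (hdf : f.totalDegree ≤ N) (hf : ∀ m, |f.coeff m| ≤ C) (i : ℕ) (m : σ →₀ ℕ) :
    |((fun g => ∑ j, A j * pderiv j g)^[i] f).coeff m| ≤
      Fintype.card σ ^ i * H ^ i *
        (∏ k ∈ range i, ((k * (d - 1) + N : ℕ) : R) ^ (Fintype.card σ + 1)) * C := by
  induction i generalizing m with
  | zero => simpa using hf m
  | succ i ih =>
    rw [Function.iterate_succ_apply']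
    refine (abs_coeff_sum_mul_pderiv_le hA
      (totalDegree_iterate_sum_mul_pderiv_le hdA hdf i) ih m).trans_eq ?_
    rw [prod_range_succ]
    ring

end OrderedRing

end MvPolynomial

open MvPolynomial

theorem height_iterate_bound_general
    (A B : MvPolynomial (Fin 2) ℤ) (d N : ℕ) (H : ℤ)
    (hdA : A.totalDegree ≤ d) (hdB : B.totalDegree ≤ d)
    (hA : ∀ m, |A.coeff m| ≤ H) (hB : ∀ m, |B.coeff m| ≤ H)
    (f : MvPolynomial (Fin 2) ℤ) (Cf : ℤ)
    (hdf : f.totalDegree ≤ N) (hf : ∀ m, |f.coeff m| ≤ Cf) :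
    ∀ i, 1 ≤ i → ∀ m,
      |(((fun h => A * pderiv 0 h + B * pderiv 1 h)^[i]) f).coeff m|
        ≤ 2 ^ i * H ^ i * (∏ k ∈ Finset.range i, ((k * (d - 1) + N : ℕ) : ℤ) ^ 3) * Cf := by
  intro i _ m
  simpa [Fin.sum_univ_two] using abs_coeff_iterate_sum_mul_pderiv_le (A := ![A, B])
    (Fin.forall_fin_two.2 ⟨hdA, hdB⟩) (Fin.forall_fin_two.2 ⟨hA, hB⟩) hdf hf i m

/-- For `D = A ∂_X + B ∂_Y` with `A, B ∈ ℤ[X,Y]`, `deg A, deg B ≤ d`,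
`‖A‖_∞, ‖B‖_∞ ≤ H`, and `f` of degree at most `N`: for every `i ≥ 1`,
`‖D^i(f)‖_∞ ≤ 2^i H^i (∏_{k=0}^{i-1} (k(d-1)+N)³) ‖f‖_∞`. -/
theorem height_iterate_bound
    (A B : MvPolynomial (Fin 2) ℤ) (d N : ℕ) (H : ℤ) (hd : 1 ≤ d)
    (hdA : A.totalDegree ≤ d) (hdB : B.totalDegree ≤ d)
    (hA : ∀ m, |A.coeff m| ≤ H) (hB : ∀ m, |B.coeff m| ≤ H)
    (f : MvPolynomial (Fin 2) ℤ) (Cf : ℤ)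
    (hdf : f.totalDegree ≤ N) (hf : ∀ m, |f.coeff m| ≤ Cf) :
    ∀ i, 1 ≤ i → ∀ m,
      |(((fun h => A * pderiv 0 h + B * pderiv 1 h)^[i]) f).coeff m|
        ≤ 2 ^ i * H ^ i * (∏ k ∈ Finset.range i, ((k * (d - 1) + N : ℕ) : ℤ) ^ 3) * Cf :=
  height_iterate_bound_general A B d N H hdA hdB hA hB f Cf hdf hf
end
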